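/- Let G be a directed acyclic graph with terminal set T ⊆ V(G), and let M ⊆ V(G) be a set intersecting every odd T-path in G such that every node v ∈ s_G(M) has total degree (in-degree plus out-degree) at most one in G \ M. Then the underlying undirected graph of G \ M is bipartite with a bipartition (A, B) such that T ⊆ A. -/

import Mathlib

/-- A (simple) directed path in the directed graph `G`, represented as a nonempty
list of pairwise distinct vertices in which every consecutive pair is an edge of `G`. -/
def IsPath {V : Type*} (G : V → V → Prop) (p : List V) : Prop :=
  p ≠ [] ∧ p.Chain' G ∧ p.Nodup

/-- `p` is a directed path from `u` to `v` in `G`. -/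
def IsPathFrom {V : Type*} (G : V → V → Prop) (u v : V) (p : List V) : Prop :=
  IsPath G p ∧ p.head? = some u ∧ p.getLast? = some v

/-- The length (number of edges) of a path, given as its list of vertices. -/
def pathLen {V : Type*} (p : List V) : ℕ := p.length - 1

/-- The list of directed edges traversed by a path. -/
def edgesOf {V : Type*} (p : List V) : List (V × V) := p.zip p.tail

/-- A directed graph is acyclic (a DAG) if no vertex lies on a directed cycle. -/
def Acyclic {V : Type*} (G : V → V → Prop) : Prop :=
  ∀ v, ¬ Relation.TransGen G v v

/-- The graph obtained from `G` by deleting the vertex set `M`. -/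
def delV {V : Type*} (G : V → V → Prop) (M : Set V) : V → V → Prop :=
  fun a b => G a b ∧ a ∉ M ∧ b ∉ M

/-- The forward shadow of `M`: vertices `v ∉ M` such that every path from a
terminal to `v` in `G` intersects `M`. -/
def fShadow {V : Type*} (G : V → V → Prop) (T M : Set V) : Set V :=
  {v | v ∉ M ∧ ∀ t ∈ T, ∀ p, IsPathFrom G t v p → ∃ z ∈ p, z ∈ M}

/-- The reverse shadow of `M`: vertices `v ∉ M` such that every path from `v`
to a terminal in `G` intersects `M`. -/
def rShadow {V : Type*} (G : V → V → Prop) (T M : Set V) : Set V :=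
  {v | v ∉ M ∧ ∀ t ∈ T, ∀ p, IsPathFrom G v t p → ∃ z ∈ p, z ∈ M}

/-!
Every vertex `v ∉ M` outside the shadow lies on an `M`-avoiding path from a terminal and on one
to a terminal. In a DAG two such paths through `v` concatenate to a `T`-path, which must be even,
so all `M`-avoiding paths from `v` to `T` have the same parity. Colouring by this parity separates
every edge of `G \ M` between non-shadow vertices, because appending an edge to a path from a
terminal flips its parity. Shadow vertices have at most one incident edge of `G \ M`, so they can
be coloured afterwards.
-/

namespace Acyclic

variable {V : Type*} {G : V → V → Prop}

theorem irrefl (hG : Acyclic G) (a : V) : ¬ G a a :=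
  fun h => hG a (.single h)

theorem eq_of_reflTransGen (hG : Acyclic G) {a b : V} (hab : Relation.ReflTransGen G a b)
    (hba : Relation.ReflTransGen G b a) : a = b := by
  rcases Relation.reflTransGen_iff_eq_or_transGen.mp hab with h | h
  · exact h.symm
  · exact (hG a (h.trans_left hba)).elim

end Acyclic

theorem pathLen_append_tail {V : Type*} {p q : List V} (hp : p ≠ []) (hq : q ≠ []) :
    pathLen (p ++ q.tail) = pathLen p + pathLen q := by
  have := List.length_pos_iff.mpr hp
  have := List.length_pos_iff.mpr hq
  simp only [pathLen, List.length_append, List.length_tail]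
  omega

namespace IsPathFrom

variable {V : Type*} {G : V → V → Prop} {u v w : V} {p q : List V}

theorem singleton (u : V) : IsPathFrom G u u [u] :=
  ⟨⟨List.cons_ne_nil u [], List.isChain_singleton u, List.nodup_singleton u⟩, rfl, rfl⟩

theorem pair (hG : Acyclic G) (h : G u v) : IsPathFrom G u v [u, v] :=
  ⟨⟨List.cons_ne_nil _ _, List.isChain_pair.mpr h,
    by simpa using fun huv : u = v => hG.irrefl v (huv ▸ h)⟩, rfl, rfl⟩

theorem reflTransGen_of_mem (hp : IsPathFrom G u v p) {x : V} (hx : x ∈ p) :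
    Relation.ReflTransGen G u x ∧ Relation.ReflTransGen G x v := by
  obtain ⟨⟨-, hch, -⟩, hu, hv⟩ := hp
  constructor
  · obtain ⟨l, rfl⟩ := List.head?_eq_some_iff.mp hu
    rcases List.mem_cons.mp hx with rfl | hx
    · exact .refl
    · exact hch.cons_induction (Relation.ReflTransGen G u) l
        (fun _ _ hxy h => h.tail hxy) .refl x hx
  · obtain ⟨l, rfl⟩ := List.getLast?_eq_some_iff.mp hv
    rcases List.mem_append.mp hx with hx | hx
    · exact hch.backwards_concat_induction (Relation.ReflTransGen G · v) l
        (fun _ _ hxy h => h.head hxy) .refl x hx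
    · rw [List.mem_singleton.mp hx]

theorem append (hG : Acyclic G) (hp : IsPathFrom G u v p) (hq : IsPathFrom G v w q) :
    IsPathFrom G u w (p ++ q.tail) := by
  obtain ⟨⟨hpne, hpch, hpnd⟩, hpu, hpv⟩ := id hp
  obtain ⟨⟨-, hqch, hqnd⟩, hqv, hqw⟩ := id hq
  obtain ⟨q, rfl⟩ := List.head?_eq_some_iff.mp hqv
  obtain ⟨p', rfl⟩ := List.getLast?_eq_some_iff.mp hpv
  have hdisj : ∀ x ∈ p' ++ [v], x ∉ q := fun x hxp hxq => by
    have hxv := hG.eq_of_reflTransGen (hp.reflTransGen_of_mem hxp).2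
      (hq.reflTransGen_of_mem (List.mem_cons_of_mem v hxq)).1
    exact (List.nodup_cons.mp hqnd).1 (hxv ▸ hxq)
  refine ⟨⟨by simp, hpch.append_overlap hqch (List.cons_ne_nil v []), ?_⟩, ?_, ?_⟩
  · exact List.nodup_append.mpr ⟨hpnd, hqnd.of_cons, fun x hx y hy hxy => hdisj x hx (hxy ▸ hy)⟩
  · rw [List.head?_append, hpu]
    rfl
  · cases q with
    | nil => simpa using hqw
    | cons y q => simpa [List.getLast?_append] using hqw

end IsPathFrom

section Shadow

variable {V : Type*} {G : V → V → Prop} {T M : Set V} {v : V}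

theorem exists_pathFrom_of_notMem_fShadow (hv : v ∉ M) (hf : v ∉ fShadow G T M) :
    ∃ t ∈ T, ∃ p, IsPathFrom G t v p ∧ ∀ z ∈ p, z ∉ M := by
  simpa [fShadow, hv] using hf

theorem exists_pathTo_of_notMem_rShadow (hv : v ∉ M) (hr : v ∉ rShadow G T M) :
    ∃ t ∈ T, ∃ p, IsPathFrom G v t p ∧ ∀ z ∈ p, z ∉ M := by
  simpa [rShadow, hv] using hr

theorem notMem_shadow_of_mem (ht : v ∈ T) (hvM : v ∉ M) :
    v ∉ fShadow G T M ∪ rShadow G T M := by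
  rintro (⟨-, h⟩ | ⟨-, h⟩) <;>
  · obtain ⟨z, hz, hzM⟩ := h v ht [v] (.singleton v)
    exact hvM (List.mem_singleton.mp hz ▸ hzM)

end Shadow

def SeparatesEdges {V : Type*} (H : V → V → Prop) (A : Set V) : Prop :=
  ∀ a b, H a b → (a ∈ A ↔ b ∉ A)

/-- A vertex of `X` joined to a vertex `w ∉ X` goes to the side opposite to `w`; an edge with
both ends in `X` is an isolated edge, and its head goes into `A'`. -/
theorem SeparatesEdges.extend {V : Type*} {H : V → V → Prop} {X A : Set V}
    (hH : ∀ a, ¬ H a a)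
    (hX : ∀ x ∈ X, {e : V × V | H e.1 e.2 ∧ (e.1 = x ∨ e.2 = x)}.Subsingleton)
    (hA : SeparatesEdges (delV H X) A) :
    ∃ A' : Set V, (∀ v ∉ X, v ∈ A' ↔ v ∈ A) ∧ SeparatesEdges H A' := by
  have edge_eq : ∀ x ∈ X, ∀ {a b}, H a b → (a = x ∨ b = x) →
      ∀ c d, H c d → (c = x ∨ d = x) → c = a ∧ d = b :=
    fun x hx a b hab hx₁ c d hcd hx₂ => Prod.mk.inj (hX x hx ⟨hcd, hx₂⟩ ⟨hab, hx₁⟩)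
  refine ⟨{v | (v ∉ X ∧ v ∈ A) ∨
      (v ∈ X ∧ ((∃ w ∉ X, (H v w ∨ H w v) ∧ w ∉ A) ∨ ∃ w ∈ X, H w v))},
    fun v hv => by simp [hv], ?_⟩
  intro a b hab
  by_cases ha : a ∈ X <;> by_cases hb : b ∈ X
  · have := edge_eq a ha hab (.inl rfl)
    have := edge_eq b hb hab (.inr rfl)
    simp only [Set.mem_ofPred_eq, ha, hb]
    grind
  · have := edge_eq a ha hab (.inl rfl)
    simp only [Set.mem_ofPred_eq, ha, hb]
    grind
  · have := edge_eq b hb hab (.inr rfl)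
    simp only [Set.mem_ofPred_eq, ha, hb]
    grind
  · simpa [ha, hb] using hA a b ⟨hab, ha, hb⟩

section Parity

variable {V : Type*} {G : V → V → Prop} {T M : Set V}

variable (G T M) in
def evenSide : Set V :=
  {v | ∃ t ∈ T, ∃ q, IsPathFrom G v t q ∧ (∀ z ∈ q, z ∉ M) ∧ Even (pathLen q)}

theorem subset_evenSide (hTM : ∀ t ∈ T, t ∉ M) : T ⊆ evenSide G T M :=
  fun t ht => ⟨t, ht, [t], .singleton t, by simpa using hTM t ht, by simp [pathLen]⟩

variable (hG : Acyclic G)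
    (hM : ∀ u ∈ T, ∀ v ∈ T, ∀ p, IsPathFrom G u v p → Odd (pathLen p) → ∃ z ∈ p, z ∈ M)
include hG hM

theorem even_pathLen_add {t t' v : V} {p q : List V} (ht : t ∈ T) (ht' : t' ∈ T)
    (hp : IsPathFrom G t v p) (hpM : ∀ z ∈ p, z ∉ M)
    (hq : IsPathFrom G v t' q) (hqM : ∀ z ∈ q, z ∉ M) :
    Even (pathLen p + pathLen q) := by
  rw [← pathLen_append_tail hp.1.1 hq.1.1, ← Nat.not_odd_iff_even]
  intro hodd
  obtain ⟨z, hz, hzM⟩ := hM t ht t' ht' _ (hp.append hG hq) hodd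
  rcases List.mem_append.mp hz with hz | hz
  · exact hpM z hz hzM
  · exact hqM z (List.mem_of_mem_tail hz) hzM

theorem mem_evenSide_iff_even {t v : V} {p : List V}
    (hv : ∃ t' ∈ T, ∃ q, IsPathFrom G v t' q ∧ ∀ z ∈ q, z ∉ M)
    (ht : t ∈ T) (hp : IsPathFrom G t v p) (hpM : ∀ z ∈ p, z ∉ M) :
    v ∈ evenSide G T M ↔ Even (pathLen p) := by
  constructor
  · rintro ⟨t', ht', q, hq, hqM, hq_even⟩
    exact (Nat.even_add.mp (even_pathLen_add hG hM ht ht' hp hpM hq hqM)).mpr hq_even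
  · intro hp_even
    obtain ⟨t', ht', q, hq, hqM⟩ := hv
    exact ⟨t', ht', q, hq, hqM,
      (Nat.even_add.mp (even_pathLen_add hG hM ht ht' hp hpM hq hqM)).mp hp_even⟩

theorem separatesEdges_evenSide :
    SeparatesEdges (delV (delV G M) (fShadow G T M ∪ rShadow G T M)) (evenSide G T M) := by
  rintro a b ⟨⟨hab, haM, hbM⟩, ha, hb⟩
  obtain ⟨t, ht, p, hp, hpM⟩ := exists_pathFrom_of_notMem_fShadow haM (fun h => ha (.inl h))
  have hpb : IsPathFrom G t b (p ++ [b]) := hp.append hG (.pair hG hab)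
  have hpbM : ∀ z ∈ p ++ [b], z ∉ M := by
    simpa [or_imp, forall_and] using ⟨hpM, hbM⟩
  rw [mem_evenSide_iff_even hG hM (exists_pathTo_of_notMem_rShadow haM (fun h => ha (.inr h)))
      ht hp hpM,
    mem_evenSide_iff_even hG hM (exists_pathTo_of_notMem_rShadow hbM (fun h => hb (.inr h)))
      ht hpb hpbM,
    show pathLen (p ++ [b]) = pathLen p + 1 from
      pathLen_append_tail hp.1.1 (List.cons_ne_nil a [b]),
    Nat.even_add_one, not_not]

end Parity

theorem exists_bipartition_of_separatesEdges {V : Type*} {G : V → V → Prop} {T M A : Set V}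
    (hA : SeparatesEdges (delV G M) A) (hTA : T ⊆ A) (hTM : ∀ t ∈ T, t ∉ M) :
    ∃ A B : Set V, A ∪ B = Mᶜ ∧ Disjoint A B ∧
      (∀ a b, (delV G M a b ∨ delV G M b a) →
        ((a ∈ A ∧ b ∈ B) ∨ (a ∈ B ∧ b ∈ A))) ∧
      T ⊆ A := by
  refine ⟨Mᶜ ∩ A, Mᶜ \ A, Set.inter_union_sdiff _ _,
    Set.disjoint_sdiff_right.mono_left Set.inter_subset_right, ?_,
    fun t ht => ⟨hTM t ht, hTA ht⟩⟩
  have hcross : ∀ a b, delV G M a b →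
      (a ∈ Mᶜ ∩ A ∧ b ∈ Mᶜ \ A) ∨ (a ∈ Mᶜ \ A ∧ b ∈ Mᶜ ∩ A) := by
    intro a b hab
    have hsep := hA a b hab
    obtain ⟨-, haM, hbM⟩ := hab
    by_cases ha : a ∈ A <;> simp_all
  rintro a b (hab | hba)
  · exact hcross a b hab
  · exact (hcross b a hba).symm.imp And.symm And.symm

/-- **(Hard direction of Theorem 2.2.)**
Let `G` be a DAG with terminal set `T` (terminals are not deleted, reflecting
`T ⊆ V^∞` and `M ∩ V^∞ = ∅` in the OddMultiwayNodeCut instance), and let `M`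
be a set intersecting every odd `T`-path of `G` such that every vertex of the
shadow `s_G(M) = f_G(M) ∪ r_G(M)` is incident to at most one edge of `G \ M`
(total degree at most one).  Then the underlying undirected graph of `G \ M`
is bipartite with a bipartition `(A, B)` satisfying `T ⊆ A`. -/
theorem easy_instance_bipartite {V : Type*} (G : V → V → Prop) (hG : Acyclic G)
    (T M : Set V) (hTM : ∀ t ∈ T, t ∉ M)
    (hM : ∀ u ∈ T, ∀ v ∈ T, ∀ p, IsPathFrom G u v p → Odd (pathLen p) →
      ∃ z ∈ p, z ∈ M)
    (hdeg : ∀ x ∈ fShadow G T M ∪ rShadow G T M,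
      Set.Subsingleton {e : V × V | delV G M e.1 e.2 ∧ (e.1 = x ∨ e.2 = x)}) :
    ∃ A B : Set V, A ∪ B = Mᶜ ∧ Disjoint A B ∧
      (∀ a b, (delV G M a b ∨ delV G M b a) →
        ((a ∈ A ∧ b ∈ B) ∨ (a ∈ B ∧ b ∈ A))) ∧
      T ⊆ A := by
  obtain ⟨A, hA_eq, hA⟩ :=
    (separatesEdges_evenSide hG hM).extend (fun a h => hG.irrefl a h.1) hdeg
  refine exists_bipartition_of_separatesEdges hA (fun t ht => ?_) hTM
  rw [hA_eq t (notMem_shadow_of_mem ht (hTM t ht))]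
  exact subset_evenSide hTM ht
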